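/- Let H₁ ≤ H₂ ≤ GL(d,ℝ) be closed subgroups with H₂/H₁ compact, and suppose H₂ is integrably admissible with essential frequency support 𝒪. Then H₁ is integrably admissible with the same essential frequency support 𝒪. Specifically: there exists a compact K ⊆ H₂ with K H₁ = H₂, and if C ⊆ 𝒪 is relatively compact open with H₂ᵀ C = 𝒪 and ((C,C))_{H₂} relatively compact, then KC is relatively compact open with closure in 𝒪, H₁ᵀ (KC) = 𝒪, and ((KC,KC))_{H₁} := {h ∈ H₁ : hᵀ(KC) ∩ KC ≠ ∅} is relatively compact in H₁. -/

import Mathlib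

open MeasureTheory Matrix Topology
open scoped Pointwise ENNReal

/-- The dual action of `h ∈ GL(d,ℝ)` on `ξ ∈ ℝ^d`, given by `ξ ↦ hᵀ ξ`. -/
noncomputable def dualAct {d : ℕ} (h : GL (Fin d) ℝ) (ξ : Fin d → ℝ) : Fin d → ℝ :=
  ((h : Matrix (Fin d) (Fin d) ℝ)ᵀ).mulVec ξ

/-- `((Y,Z)) = {h ∈ H : hᵀ Y ∩ Z ≠ ∅}`. -/
def pairSet {d : ℕ} (H : Subgroup (GL (Fin d) ℝ)) (Y Z : Set (Fin d → ℝ)) :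
    Set (GL (Fin d) ℝ) :=
  {h | h ∈ H ∧ ∃ ξ ∈ Y, dualAct h ξ ∈ Z}

/-- `H ≤ GL(d,ℝ)` is integrably admissible with essential frequency support `O`:
`H` is closed, `O` is open, co-null and `Hᵀ`-invariant, the dual action of `H` on `O`
is proper, and `O = Hᵀ C` for some compact `C ⊆ O`. -/
def IsIntegrablyAdmissible {d : ℕ} (H : Subgroup (GL (Fin d) ℝ))
    (O : Set (Fin d → ℝ)) : Prop :=
  IsClosed (H : Set (GL (Fin d) ℝ)) ∧ IsOpen O ∧ MeasureTheory.volume Oᶜ = 0 ∧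
  (∀ h ∈ H, ∀ ξ ∈ O, dualAct h ξ ∈ O) ∧
  (∀ K : Set (Fin d → ℝ), K ⊆ O → IsCompact K →
    IsCompact {p : GL (Fin d) ℝ × (Fin d → ℝ) |
      p.1 ∈ H ∧ p.2 ∈ O ∧ p.2 ∈ K ∧ dualAct p.1 p.2 ∈ K}) ∧
  ∃ C : Set (Fin d → ℝ), C ⊆ O ∧ IsCompact C ∧ O = ⋃ h ∈ H, dualAct h '' C

/- ## Auxiliary lemmas -/

lemma gl_locallyCompact {d : ℕ} : LocallyCompactSpace (GL (Fin d) ℝ) := by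
  haveI : LocallyCompactSpace (Matrix (Fin d) (Fin d) ℝ) :=
    (inferInstance : LocallyCompactSpace (Fin d → Fin d → ℝ))
  haveI : LocallyCompactSpace (Matrix (Fin d) (Fin d) ℝ)ᵐᵒᵖ :=
    (MulOpposite.opHomeomorph :
      Matrix (Fin d) (Fin d) ℝ ≃ₜ _).symm.isClosedEmbedding.locallyCompactSpace
  have h1 : IsClosed (Set.range (Units.embedProduct (Matrix (Fin d) (Fin d) ℝ))) := by
    have hrange : Set.range (Units.embedProduct (Matrix (Fin d) (Fin d) ℝ)) =
        {p : Matrix (Fin d) (Fin d) ℝ × (Matrix (Fin d) (Fin d) ℝ)ᵐᵒᵖ |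
          p.1 * p.2.unop = 1 ∧ p.2.unop * p.1 = 1} := by
      ext ⟨x, y⟩
      constructor
      · rintro ⟨u, hu⟩
        rw [← hu]
        exact ⟨u.mul_inv, u.inv_mul⟩
      · rintro ⟨ha, hb⟩
        exact ⟨⟨x, y.unop, ha, hb⟩, rfl⟩
    rw [hrange]
    exact IsClosed.inter
      (isClosed_eq (continuous_fst.mul
        (MulOpposite.continuous_unop.comp continuous_snd)) continuous_const)
      (isClosed_eq ((MulOpposite.continuous_unop.comp continuous_snd).mul
        continuous_fst) continuous_const)
  have hce : IsClosedEmbedding (Units.embedProduct (Matrix (Fin d) (Fin d) ℝ)) :=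
    ⟨Units.isEmbedding_embedProduct, h1⟩
  exact hce.locallyCompactSpace

/-- In a locally compact group with cocompact closed subgroup, there is a compact
set meeting every coset. -/
lemma exists_compact_factorization {G : Type*} [Group G] [TopologicalSpace G]
    [IsTopologicalGroup G] [LocallyCompactSpace G] (N : Subgroup G)
    [CompactSpace (G ⧸ N)] :
    ∃ K : Set G, IsCompact K ∧ ∀ g : G, ∃ k ∈ K, ∃ n ∈ N, g = k * n := by
  choose K hKc hKn using fun x : G => exists_compact_mem_nhds x
  have hcov : (Set.univ : Set (G ⧸ N)) ⊆
      ⋃ x : G, (QuotientGroup.mk '' interior (K x) : Set (G ⧸ N)) := by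
    rintro q' -
    obtain ⟨g, rfl⟩ := QuotientGroup.mk_surjective q'
    exact Set.mem_iUnion.2
      ⟨g, Set.mem_image_of_mem _ (mem_interior_iff_mem_nhds.2 (hKn g))⟩
  obtain ⟨t, ht⟩ := isCompact_univ.elim_finite_subcover _
    (fun x => QuotientGroup.isOpenMap_coe _ isOpen_interior) hcov
  refine ⟨⋃ x ∈ t, K x, t.isCompact_biUnion (fun x _ => hKc x), fun g => ?_⟩
  have hg : ((g : G ⧸ N)) ∈ ⋃ x ∈ t, (QuotientGroup.mk '' interior (K x) : Set (G ⧸ N)) :=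
    ht (Set.mem_univ _)
  obtain ⟨x, hx, hgx⟩ := Set.mem_iUnion₂.1 hg
  obtain ⟨y, hy, hyg⟩ := hgx
  refine ⟨y, Set.mem_biUnion hx (interior_subset hy), y⁻¹ * g, ?_, by group⟩
  exact (QuotientGroup.eq).1 hyg

lemma dualAct_mul {d : ℕ} (a b : GL (Fin d) ℝ) (ξ : Fin d → ℝ) :
    dualAct (a * b) ξ = dualAct b (dualAct a ξ) := by
  simp [dualAct, Units.val_mul, Matrix.transpose_mul, Matrix.mulVec_mulVec]

lemma dualAct_one {d : ℕ} (ξ : Fin d → ℝ) : dualAct (1 : GL (Fin d) ℝ) ξ = ξ := by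
  simp [dualAct]

lemma continuous_dualAct2 {d : ℕ} :
    Continuous fun p : GL (Fin d) ℝ × (Fin d → ℝ) => dualAct p.1 p.2 :=
  (Continuous.matrix_transpose
    (Units.continuous_val.comp continuous_fst)).matrix_mulVec continuous_snd

lemma continuous_dualAct {d : ℕ} (k : GL (Fin d) ℝ) : Continuous (dualAct k) :=
  continuous_dualAct2.comp (Continuous.prodMk_right k)

lemma dualAct_inv_cancel {d : ℕ} (k : GL (Fin d) ℝ) (ξ : Fin d → ℝ) :
    dualAct k⁻¹ (dualAct k ξ) = ξ := by
  rw [← dualAct_mul, mul_inv_cancel, dualAct_one]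

lemma isOpen_dualAct_image {d : ℕ} (k : GL (Fin d) ℝ) {C : Set (Fin d → ℝ)}
    (hC : IsOpen C) : IsOpen (dualAct k '' C) := by
  have himg : dualAct k '' C = dualAct k⁻¹ ⁻¹' C := by
    ext y
    constructor
    · rintro ⟨x, hx, rfl⟩
      rwa [Set.mem_preimage, dualAct_inv_cancel]
    · intro hy
      exact ⟨dualAct k⁻¹ y, hy, by
        rw [← dualAct_mul, inv_mul_cancel, dualAct_one]⟩
  rw [himg]
  exact hC.preimage (continuous_dualAct k⁻¹)

lemma biUnion_dualAct_eq_image {d : ℕ} (K : Set (GL (Fin d) ℝ))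
    (C : Set (Fin d → ℝ)) :
    ⋃ k ∈ K, dualAct k '' C
      = (fun p : GL (Fin d) ℝ × (Fin d → ℝ) => dualAct p.1 p.2) '' (K ×ˢ C) := by
  ext ξ
  simp only [Set.mem_iUnion, Set.mem_image, Set.mem_prod, Prod.exists]
  aesop

lemma gen_transfer {d : ℕ} (H₁ H₂ : Subgroup (GL (Fin d) ℝ)) (hle : H₁ ≤ H₂)
    (O : Set (Fin d → ℝ))
    (hinv : ∀ h ∈ H₂, ∀ ξ ∈ O, dualAct h ξ ∈ O)
    (K : Set (GL (Fin d) ℝ)) (hKH₂ : K ⊆ (H₂ : Set (GL (Fin d) ℝ)))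
    (hfact : ∀ g ∈ H₂, ∃ k ∈ K, ∃ n ∈ H₁, g = k * n)
    (C : Set (Fin d → ℝ)) (hCO : C ⊆ O)
    (hgen : O = ⋃ h ∈ H₂, dualAct h '' C) :
    O = ⋃ h ∈ H₁, dualAct h '' (⋃ k ∈ K, dualAct k '' C) := by
  have hKCO : (⋃ k ∈ K, dualAct k '' C) ⊆ O := by
    rintro ξ hξ
    obtain ⟨k, hk, c, hc, rfl⟩ := by
      simpa only [Set.mem_iUnion, Set.mem_image] using hξ
    exact hinv k (hKH₂ hk) c (hCO hc)
  apply Set.Subset.antisymm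
  · intro ξ hξ
    rw [hgen] at hξ
    obtain ⟨h, hh, c, hc, rfl⟩ := by
      simpa only [Set.mem_iUnion, Set.mem_image] using hξ
    obtain ⟨k, hk, n, hn, rfl⟩ := hfact h hh
    rw [dualAct_mul]
    refine Set.mem_iUnion₂.2 ⟨n, hn, ⟨dualAct k c, ?_, rfl⟩⟩
    exact Set.mem_iUnion₂.2 ⟨k, hk, ⟨c, hc, rfl⟩⟩
  · intro ξ hξ
    obtain ⟨h, hh, y, hy, rfl⟩ := by
      simpa only [Set.mem_iUnion, Set.mem_image] using hξ
    obtain ⟨k, hk, c, hc, rfl⟩ := hy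
    exact hinv h (hle hh) _ (hinv k (hKH₂ hk) c (hCO hc))

theorem stmt13 {d : ℕ} (H₁ H₂ : Subgroup (GL (Fin d) ℝ)) (hle : H₁ ≤ H₂)
    (hcl₁ : IsClosed (H₁ : Set (GL (Fin d) ℝ)))
    (O : Set (Fin d → ℝ))
    (hadm₂ : IsIntegrablyAdmissible H₂ O)
    (hcocompact : CompactSpace (H₂ ⧸ H₁.subgroupOf H₂)) :
    -- H₁ is integrably admissible with the same essential frequency support
    IsIntegrablyAdmissible H₁ O ∧
    -- there is a compact K ⊆ H₂ with K H₁ = H₂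
    ∃ K : Set (GL (Fin d) ℝ), IsCompact K ∧ K ⊆ (H₂ : Set (GL (Fin d) ℝ)) ∧
      K * (H₁ : Set (GL (Fin d) ℝ)) = (H₂ : Set (GL (Fin d) ℝ)) ∧
      -- and for any suitable generating set C for H₂, KC works for H₁
      ∀ C : Set (Fin d → ℝ), C ⊆ O → IsOpen C → IsCompact (closure C) →
        closure C ⊆ O → O = ⋃ h ∈ H₂, dualAct h '' C →
        IsCompact (closure (pairSet H₂ C C)) →
        (IsCompact (closure (⋃ k ∈ K, dualAct k '' C)) ∧
          IsOpen (⋃ k ∈ K, dualAct k '' C) ∧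
          closure (⋃ k ∈ K, dualAct k '' C) ⊆ O ∧
          O = ⋃ h ∈ H₁, dualAct h '' (⋃ k ∈ K, dualAct k '' C) ∧
          IsCompact (closure (pairSet H₁ (⋃ k ∈ K, dualAct k '' C)
            (⋃ k ∈ K, dualAct k '' C)))) := by
  obtain ⟨hcl₂, hOopen, hOnull, hinv, hprop, C₀, hC₀O, hC₀c, hC₀gen⟩ := hadm₂
  -- the compact set K
  haveI : LocallyCompactSpace (GL (Fin d) ℝ) := gl_locallyCompact
  haveI : LocallyCompactSpace H₂ := hcl₂.locallyCompactSpace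
  obtain ⟨K₀, hK₀c, hK₀⟩ := exists_compact_factorization (H₁.subgroupOf H₂)
  set K : Set (GL (Fin d) ℝ) := Subtype.val '' K₀ with hKdef
  have hKc : IsCompact K := hK₀c.image continuous_subtype_val
  have hKH₂ : K ⊆ (H₂ : Set (GL (Fin d) ℝ)) := by
    rintro _ ⟨k, _, rfl⟩; exact k.2
  have hfact : ∀ g ∈ H₂, ∃ k ∈ K, ∃ n ∈ H₁, g = k * n := by
    intro g hg
    obtain ⟨k, hk, n, hn, he⟩ := hK₀ ⟨g, hg⟩
    refine ⟨k, Set.mem_image_of_mem _ hk, n, (Subgroup.mem_subgroupOf).1 hn, ?_⟩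
    have := congrArg Subtype.val he
    simpa using this
  -- compactness of K-orbits of compact sets
  have hKorb : ∀ C : Set (Fin d → ℝ), IsCompact C →
      IsCompact (⋃ k ∈ K, dualAct k '' C) := by
    intro C hC
    rw [biUnion_dualAct_eq_image]
    exact (hKc.prod hC).image continuous_dualAct2
  have hKorbO : ∀ C : Set (Fin d → ℝ), C ⊆ O → (⋃ k ∈ K, dualAct k '' C) ⊆ O := by
    intro C hCO ξ hξ
    obtain ⟨k, hk, c, hc, rfl⟩ := by
      simpa only [Set.mem_iUnion, Set.mem_image] using hξ
    exact hinv k (hKH₂ hk) c (hCO hc)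
  -- properness for H₁
  have hprop₁ : ∀ Kc : Set (Fin d → ℝ), Kc ⊆ O → IsCompact Kc →
      IsCompact {p : GL (Fin d) ℝ × (Fin d → ℝ) |
        p.1 ∈ H₁ ∧ p.2 ∈ O ∧ p.2 ∈ Kc ∧ dualAct p.1 p.2 ∈ Kc} := by
    intro Kc hKcO hKcc
    have heq : {p : GL (Fin d) ℝ × (Fin d → ℝ) |
          p.1 ∈ H₁ ∧ p.2 ∈ O ∧ p.2 ∈ Kc ∧ dualAct p.1 p.2 ∈ Kc}
        = {p : GL (Fin d) ℝ × (Fin d → ℝ) |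
          p.1 ∈ H₂ ∧ p.2 ∈ O ∧ p.2 ∈ Kc ∧ dualAct p.1 p.2 ∈ Kc}
          ∩ (Prod.fst ⁻¹' (H₁ : Set (GL (Fin d) ℝ))) := by
      ext p
      constructor
      · rintro ⟨h1, h2⟩; exact ⟨⟨hle h1, h2⟩, h1⟩
      · rintro ⟨⟨_, h2⟩, h1⟩; exact ⟨h1, h2⟩
    rw [heq]
    exact (hprop Kc hKcO hKcc).inter_right (hcl₁.preimage continuous_fst)
  -- H₁ is integrably admissible
  refine ⟨⟨hcl₁, hOopen, hOnull, fun h hh ξ hξ => hinv h (hle hh) ξ hξ, hprop₁,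
    ⟨⋃ k ∈ K, dualAct k '' C₀, hKorbO C₀ hC₀O, hKorb C₀ hC₀c,
      gen_transfer H₁ H₂ hle O hinv K hKH₂ hfact C₀ hC₀O hC₀gen⟩⟩, K, hKc, hKH₂, ?_, ?_⟩
  · -- K * H₁ = H₂
    apply Set.Subset.antisymm
    · rintro g hg
      rw [Set.mem_mul] at hg
      obtain ⟨k, hk, n, hn, rfl⟩ := hg
      exact H₂.mul_mem (hKH₂ hk) (hle hn)
    · intro g hg
      obtain ⟨k, hk, n, hn, rfl⟩ := hfact g hg
      exact Set.mul_mem_mul hk hn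
  · -- the C statement
    intro C hCO hCopen hCclc hCclO hCgen _
    set U : Set (Fin d → ℝ) := ⋃ k ∈ K, dualAct k '' C with hUdef
    set D : Set (Fin d → ℝ) := ⋃ k ∈ K, dualAct k '' closure C with hDdef
    have hUD : U ⊆ D := by
      apply Set.iUnion₂_mono
      intro k _
      exact Set.image_mono subset_closure
    have hDc : IsCompact D := hKorb _ hCclc
    have hDO : D ⊆ O := hKorbO _ hCclO
    have hclUD : closure U ⊆ D := closure_minimal hUD hDc.isClosed
    refine ⟨hDc.of_isClosed_subset isClosed_closure hclUD,
      isOpen_biUnion (fun k _ => isOpen_dualAct_image k hCopen),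
      hclUD.trans hDO,
      gen_transfer H₁ H₂ hle O hinv K hKH₂ hfact C hCO hCgen, ?_⟩
    -- compactness of closure of pairSet
    have hS : IsCompact {p : GL (Fin d) ℝ × (Fin d → ℝ) |
        p.1 ∈ H₂ ∧ p.2 ∈ O ∧ p.2 ∈ D ∧ dualAct p.1 p.2 ∈ D} := hprop D hDO hDc
    have hsub : pairSet H₁ U U ⊆ Prod.fst '' {p : GL (Fin d) ℝ × (Fin d → ℝ) |
        p.1 ∈ H₂ ∧ p.2 ∈ O ∧ p.2 ∈ D ∧ dualAct p.1 p.2 ∈ D} := by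
      rintro h ⟨hh, ξ, hξU, hξ'U⟩
      exact ⟨(h, ξ), ⟨hle hh, hDO (hUD hξU), hUD hξU, hUD hξ'U⟩, rfl⟩
    have himc : IsCompact (Prod.fst '' {p : GL (Fin d) ℝ × (Fin d → ℝ) |
        p.1 ∈ H₂ ∧ p.2 ∈ O ∧ p.2 ∈ D ∧ dualAct p.1 p.2 ∈ D}) :=
      hS.image continuous_fst
    exact himc.of_isClosed_subset isClosed_closure
      (closure_minimal hsub himc.isClosed)
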